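/- arXiv:1712.00290 — 6 statements merged into one kernel-verified Lean document; each statement's English description precedes it below -/
import Mathlib

section
/- Let q ≥ 3 be an odd integer and G_{1,q} = ⟨a,b,s,t | [a,b]=1, s⁻¹a^q s = ab, t⁻¹a^q t = ab⁻¹⟩. The endomorphism θ of G_{1,q} determined by a ↦ a^q, b ↦ b^q, s ↦ s, t ↦ t is surjective. -/
/-- The free group generators: 0 ↦ a, 1 ↦ b, 2 ↦ s, 3 ↦ t. -/
def ga : FreeGroup (Fin 4) := FreeGroup.of 0
def gb : FreeGroup (Fin 4) := FreeGroup.of 1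
def gs : FreeGroup (Fin 4) := FreeGroup.of 2
def gt : FreeGroup (Fin 4) := FreeGroup.of 3

/-- Relators of the tubular group `G_{p,q}`. -/
def tubularRels (p q : ℤ) : Set (FreeGroup (Fin 4)) :=
  { ga * gb * ga⁻¹ * gb⁻¹,
    gs⁻¹ * ga ^ q * gs * (ga ^ p * gb)⁻¹,
    gt⁻¹ * ga ^ q * gt * (ga ^ p * gb⁻¹)⁻¹ }

lemma rel_one {α : Type*} {rels : Set (FreeGroup α)} {r : FreeGroup α} (hr : r ∈ rels) :
    PresentedGroup.mk rels r = 1 :=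
  (QuotientGroup.eq_one_iff r).mpr (Subgroup.subset_normalClosure hr)

section
variable (q : ℤ)
local notation "A" => (PresentedGroup.of 0 : PresentedGroup (tubularRels 1 q))
local notation "B" => (PresentedGroup.of 1 : PresentedGroup (tubularRels 1 q))
local notation "S" => (PresentedGroup.of 2 : PresentedGroup (tubularRels 1 q))
local notation "T" => (PresentedGroup.of 3 : PresentedGroup (tubularRels 1 q))

lemma rel1 : A * B = B * A := by
  have := rel_one (rels := tubularRels 1 q) (r := ga * gb * ga⁻¹ * gb⁻¹) (by left; rfl)
  simp only [map_mul, map_inv] at this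
  rw [← commutatorElement_eq_one_iff_mul_comm]
  exact this

lemma rel2 : S⁻¹ * A ^ q * S = A * B := by
  have := rel_one (rels := tubularRels 1 q)
    (r := gs⁻¹ * ga ^ q * gs * (ga ^ 1 * gb)⁻¹) (by right; left; rfl)
  simp only [map_mul, map_inv, map_zpow, zpow_one] at this
  rw [mul_inv_eq_one] at this
  exact this

lemma rel3 : T⁻¹ * A ^ q * T = A * B⁻¹ := by
  have := rel_one (rels := tubularRels 1 q)
    (r := gt⁻¹ * ga ^ q * gt * (ga ^ 1 * gb⁻¹)⁻¹) (by right; right; rfl)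
  simp only [map_mul, map_inv, map_zpow, zpow_one] at this
  rw [mul_inv_eq_one] at this
  exact this

end

/-- The endomorphism θ of `G_{1,q}` (q ≥ 3 odd) determined by a ↦ a^q, b ↦ b^q,
s ↦ s, t ↦ t is surjective. -/
theorem theta_surjective (q : ℤ) (hq : 3 ≤ q) (hodd : Odd q)
    (θ : PresentedGroup (tubularRels 1 q) →* PresentedGroup (tubularRels 1 q))
    (h0 : θ (PresentedGroup.of 0) = (PresentedGroup.of 0) ^ q)
    (h1 : θ (PresentedGroup.of 1) = (PresentedGroup.of 1) ^ q)
    (h2 : θ (PresentedGroup.of 2) = PresentedGroup.of 2)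
    (h3 : θ (PresentedGroup.of 3) = PresentedGroup.of 3) :
    Function.Surjective θ := by
  set A := (PresentedGroup.of 0 : PresentedGroup (tubularRels 1 q))
  set B := (PresentedGroup.of 1 : PresentedGroup (tubularRels 1 q))
  set S := (PresentedGroup.of 2 : PresentedGroup (tubularRels 1 q))
  set T := (PresentedGroup.of 3 : PresentedGroup (tubularRels 1 q))
  rw [← MonoidHom.range_eq_top]
  have hAq : A ^ q ∈ θ.range := ⟨PresentedGroup.of 0, h0⟩
  have hS : S ∈ θ.range := ⟨PresentedGroup.of 2, h2⟩
  have hT : T ∈ θ.range := ⟨PresentedGroup.of 3, h3⟩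
  have hAB : A * B ∈ θ.range := by
    rw [← rel2]
    exact mul_mem (mul_mem (inv_mem hS) hAq) hS
  have hAB' : A * B⁻¹ ∈ θ.range := by
    rw [← rel3]
    exact mul_mem (mul_mem (inv_mem hT) hAq) hT
  have hcomm : A * B = B * A := rel1 q
  have hA2 : A ^ (2:ℤ) ∈ θ.range := by
    have : (A * B) * (A * B⁻¹) = A ^ (2:ℤ) := by
      rw [mul_assoc, ← mul_assoc B, ← hcomm]
      group
      exact (zpow_two A).symm
    rw [← this]
    exact mul_mem hAB hAB'
  obtain ⟨k, hk⟩ := hodd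
  have hA : A ∈ θ.range := by
    have : A ^ q * (A ^ (2:ℤ)) ^ (-k) = A := by
      rw [← zpow_mul, ← zpow_add]
      have he : q + 2 * -k = 1 := by omega
      rw [he, zpow_one]
    rw [← this]
    exact mul_mem hAq (zpow_mem hA2 _)
  have hB : B ∈ θ.range := by
    have : A⁻¹ * (A * B) = B := by group
    rw [← this]
    exact mul_mem (inv_mem hA) hAB
  rw [← top_le_iff, ← PresentedGroup.closure_range_of (tubularRels 1 q), Subgroup.closure_le]
  rintro x ⟨i, rfl⟩
  fin_cases i <;> assumption
end

section
/- Every finitely generated residually finite group is Hopfian: if G is finitely generated and residually finite, then every surjective group homomorphism G → G is injective. -/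
/-- A group is residually finite if every nontrivial element survives in some
finite quotient. -/
def ResiduallyFinite (G : Type*) [Group G] : Prop :=
  ∀ g : G, g ≠ 1 → ∃ (F : Type) (_ : Group F) (_ : Finite F) (φ : G →* F), φ g ≠ 1

lemma hom_finite {G F : Type*} [Group G] [Group F] [Finite F] (hfg : Group.FG G) :
    Finite (G →* F) := by
  obtain ⟨S, hS⟩ := hfg.1
  have : Function.Injective (fun f : G →* F => (fun s : S => f s)) := by
    intro f g h
    apply MonoidHom.eq_of_eqOn_dense hS
    intro x hx
    exact congrFun h ⟨x, hx⟩
  exact Finite.of_injective _ this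

/-- Malce'ev: a finitely generated residually finite group is Hopfian. -/
theorem fg_residuallyFinite_hopfian (G : Type*) [Group G] (hfg : Group.FG G)
    (hrf : ResiduallyFinite G) (φ : G →* G) (hsurj : Function.Surjective φ) :
    Function.Injective φ := by
  rw [← MonoidHom.ker_eq_bot_iff, eq_bot_iff]
  intro g hg
  by_contra hg1
  obtain ⟨F, _, _, ψ, hψ⟩ := hrf g hg1
  have : Finite (G →* F) := hom_finite hfg
  have hinj : Function.Injective (fun ρ : G →* F => ρ.comp φ) := by
    intro ρ₁ ρ₂ h
    ext x
    obtain ⟨y, rfl⟩ := hsurj x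
    exact congrArg (fun f : G →* F => f y) h
  obtain ⟨ρ, hρ⟩ := (Finite.injective_iff_surjective.mp hinj) ψ
  have : ψ g = 1 := by
    rw [← hρ]
    simp [MonoidHom.mem_ker.mp hg]
  exact hψ this
end

section
/- Let p, q be nonzero integers with q not dividing 2p, and let h = gcd(2p, q). Let F be a finite group containing commuting elements a, b and elements s, t with s⁻¹a^q s = a^p b and t⁻¹a^q t = a^p b⁻¹. Then s⁻¹a^h s commutes with a, with b, and with a^p b⁻¹. -/
/-!
Let `r` be the order of `a` and `g = gcd(r, q)`. Conjugation preserves orders, so `a ^ p * b` and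
`a ^ p * b⁻¹` are killed by `d = r / g`, as `a ^ q` is. Since `a` and `b` commute, their product is
`a ^ (2 * p)`, hence `r = g * d` divides `2 * p * d`, i.e. `g ∣ 2 * p`, and so `g ∣ h`. By Bezout,
`a ^ h` is then a power of `a ^ q`, and conjugating by `s` turns it into a power of `a ^ p * b`,
which commutes with `a`, `b` and `a ^ p * b⁻¹`.
-/

namespace Int

theorem dvd_mul_ediv_gcd (r q : ℤ) : r ∣ q * (r / gcd r q) :=
  Dvd.intro (q / gcd r q) <| by
    rw [← Int.mul_ediv_assoc _ (gcd_dvd_left r q), mul_comm q r,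
      Int.mul_ediv_assoc _ (gcd_dvd_right r q)]

theorem dvd_of_dvd_mul_ediv {g r m : ℤ} (hg : g ∣ r) (hr : r ≠ 0) (h : r ∣ m * (r / g)) :
    g ∣ m := by
  obtain ⟨d, rfl⟩ := hg
  rw [Int.mul_ediv_cancel_left _ (left_ne_zero_of_mul hr)] at h
  exact (mul_dvd_mul_iff_right (right_ne_zero_of_mul hr)).mp h

end Int

section

variable {G : Type*} [Group G]

theorem conj_inv_zpow (s x : G) (n : ℤ) : (s⁻¹ * x * s) ^ n = s⁻¹ * x ^ n * s := by
  simpa using conj_zpow (a := s⁻¹) (b := x) (i := n)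

theorem Commute.zpow_two_mul_eq {a b : G} (hab : Commute a b) (p : ℤ) :
    a ^ (2 * p) = (a ^ p * b) * (a ^ p * b⁻¹) := by
  rw [mul_assoc, ← mul_assoc b, ((hab.zpow_left p).symm).eq, two_mul, zpow_add]
  group

theorem Commute.zpow_mul_commute_zpow_mul_inv {a b : G} (hab : Commute a b) {p : ℤ} :
    Commute (a ^ p * b) (a ^ p * b⁻¹) :=
  ((Commute.zpow_self a p).mul_left hab.symm |>.zpow_right p).mul_right
    ((hab.zpow_left p).mul_left (Commute.refl b)).inv_right

theorem gcd_orderOf_dvd_two_mul {a b s t : G} {p q : ℤ} (ha : IsOfFinOrder a)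
    (hab : Commute a b) (hs : s⁻¹ * a ^ q * s = a ^ p * b)
    (ht : t⁻¹ * a ^ q * t = a ^ p * b⁻¹) :
    (Int.gcd (orderOf a) q : ℤ) ∣ 2 * p := by
  set r : ℤ := (orderOf a : ℤ)
  set d := r / Int.gcd r q
  have had : a ^ (q * d) = 1 := orderOf_dvd_iff_zpow_eq_one.mp (Int.dvd_mul_ediv_gcd r q)
  have hsd : (a ^ p * b) ^ d = 1 := by
    rw [← hs, conj_inv_zpow, ← zpow_mul, had, mul_one, inv_mul_cancel]
  have htd : (a ^ p * b⁻¹) ^ d = 1 := by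
    rw [← ht, conj_inv_zpow, ← zpow_mul, had, mul_one, inv_mul_cancel]
  have h2pd : a ^ (2 * p * d) = 1 := by
    rw [zpow_mul, hab.zpow_two_mul_eq, hab.zpow_mul_commute_zpow_mul_inv.mul_zpow, hsd, htd,
      one_mul]
  exact Int.dvd_of_dvd_mul_ediv (Int.gcd_dvd_left _ _) (Int.natCast_ne_zero.mpr ha.orderOf_pos.ne')
    (orderOf_dvd_iff_zpow_eq_one.mpr h2pd)

theorem exists_zpow_eq_zpow_zpow_of_gcd_orderOf_dvd {a : G} {q n : ℤ}
    (hn : (Int.gcd (orderOf a) q : ℤ) ∣ n) : ∃ k : ℤ, a ^ n = (a ^ q) ^ k := by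
  obtain ⟨c, rfl⟩ := hn
  refine ⟨Int.gcdB (orderOf a) q * c, ?_⟩
  rw [Int.gcd_eq_gcd_ab, add_mul, zpow_add, mul_assoc, zpow_mul a (orderOf a), zpow_natCast,
    pow_orderOf_eq_one, one_zpow, one_mul, mul_assoc, zpow_mul]

end

theorem conj_gcd_power_commutes_general (p q : ℤ) (h : ℕ) (hh : h = Int.gcd (2 * p) q)
    (F : Type*) [Group F] [Finite F] (a b s t : F)
    (hab : Commute a b)
    (hs : s⁻¹ * a ^ q * s = a ^ p * b)
    (ht : t⁻¹ * a ^ q * t = a ^ p * b⁻¹) :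
    Commute (s⁻¹ * a ^ (h : ℤ) * s) a ∧
    Commute (s⁻¹ * a ^ (h : ℤ) * s) b ∧
    Commute (s⁻¹ * a ^ (h : ℤ) * s) (a ^ p * b⁻¹) := by
  have hgh : (Int.gcd (orderOf a) q : ℤ) ∣ h := by
    rw [hh]
    exact Int.natCast_dvd_natCast.mpr <| Int.dvd_gcd
      (gcd_orderOf_dvd_two_mul (isOfFinOrder_of_finite a) hab hs ht) (Int.gcd_dvd_right _ _)
  obtain ⟨k, hk⟩ := exists_zpow_eq_zpow_zpow_of_gcd_orderOf_dvd hgh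
  have hconj : s⁻¹ * a ^ (h : ℤ) * s = (a ^ p * b) ^ k := by
    rw [hk, ← conj_inv_zpow, hs]
  rw [hconj]
  exact ⟨((Commute.zpow_self a p).mul_left hab.symm).zpow_left k,
    ((hab.zpow_left p).mul_left (Commute.refl b)).zpow_left k,
    hab.zpow_mul_commute_zpow_mul_inv.zpow_left k⟩

/-- Let p, q be nonzero integers with q not dividing 2p and h = gcd(2p, q).
In a finite group containing commuting a, b and elements s, t with
s⁻¹ a^q s = a^p b and t⁻¹ a^q t = a^p b⁻¹, the element s⁻¹ a^h s commutes
with a, with b and with a^p b⁻¹. -/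
theorem conj_gcd_power_commutes (p q : ℤ) (hp : p ≠ 0) (hq : q ≠ 0)
    (hnd : ¬ q ∣ 2 * p) (h : ℕ) (hh : h = Int.gcd (2 * p) q)
    (F : Type*) [Group F] [Finite F] (a b s t : F)
    (hab : Commute a b)
    (hs : s⁻¹ * a ^ q * s = a ^ p * b)
    (ht : t⁻¹ * a ^ q * t = a ^ p * b⁻¹) :
    Commute (s⁻¹ * a ^ (h : ℤ) * s) a ∧
    Commute (s⁻¹ * a ^ (h : ℤ) * s) b ∧
    Commute (s⁻¹ * a ^ (h : ℤ) * s) (a ^ p * b⁻¹) :=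
  conj_gcd_power_commutes_general p q h hh F a b s t hab hs ht
end

section
/- Let F be a finite group, a, b ∈ F commuting elements, and q a nonzero integer. Suppose there exist s, t ∈ F with s⁻¹a^q s = a^p b and t⁻¹a^q t = a^p b⁻¹ for some integer p. If r is the order of a in F, then gcd(r, q) divides 2p. -/
/-- In a finite group with commuting a, b and s, t conjugating a^q to a^p b and
a^p b⁻¹ respectively, gcd(orderOf a, q) divides 2p. -/
theorem gcd_order_dvd_two_p (F : Type*) [Group F] [Finite F] (a b s t : F)
    (hab : Commute a b) (p q : ℤ) (hq : q ≠ 0)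
    (hs : s⁻¹ * a ^ q * s = a ^ p * b)
    (ht : t⁻¹ * a ^ q * t = a ^ p * b⁻¹)
    (r : ℕ) (hr : r = orderOf a) :
    ((Int.gcd (r : ℤ) q : ℤ)) ∣ 2 * p := by
  -- d = order of a^q
  set d : ℕ := orderOf (a ^ q) with hd
  have hsc1 : SemiconjBy s⁻¹ (a ^ q) (a ^ p * b) := by
    unfold SemiconjBy
    rw [← hs]; group
  have hsc2 : SemiconjBy t⁻¹ (a ^ q) (a ^ p * b⁻¹) := by
    unfold SemiconjBy
    rw [← ht]; group
  have h1 : orderOf (a ^ p * b) = d := (hsc1.orderOf_eq s⁻¹).symm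
  have h2 : orderOf (a ^ p * b⁻¹) = d := (hsc2.orderOf_eq t⁻¹).symm
  -- commuting elements
  have hcab : Commute (a ^ p) b := hab.zpow_left p
  have hcab' : Commute (a ^ p) b⁻¹ := hcab.inv_right
  have hkey : a ^ (2 * p * (d : ℤ)) = 1 := by
    have e1 : (a ^ p * b) ^ d = 1 := by rw [← h1]; exact pow_orderOf_eq_one _
    have e2 : (a ^ p * b⁻¹) ^ d = 1 := by rw [← h2]; exact pow_orderOf_eq_one _
    have e3 : ((a ^ p * b) * (a ^ p * b⁻¹)) ^ d = 1 := by
      rw [Commute.mul_pow, e1, e2, one_mul]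
      exact Commute.mul_left ((Commute.refl (a ^ p)).mul_right hcab')
        (hcab.symm.mul_right (Commute.refl b).inv_right)
    have e4 : (a ^ p * b) * (a ^ p * b⁻¹) = a ^ (2 * p) := by
      rw [mul_assoc, ← mul_assoc b, hcab.symm.eq, mul_assoc, mul_inv_cancel, mul_one,
        ← zpow_add]
      ring_nf
    rw [e4, ← zpow_natCast, ← zpow_mul] at e3
    exact e3
  have hrdvd : (r : ℤ) ∣ 2 * p * (d : ℤ) := by
    rw [hr]; exact orderOf_dvd_iff_zpow_eq_one.mpr hkey
  -- compute d in terms of gcd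
  have hdval : d = r / Nat.gcd r q.natAbs := by
    have : orderOf (a ^ q) = orderOf (a ^ q.natAbs) := by
      rcases Int.natAbs_eq q with h | h
      · conv_lhs => rw [h]
        rw [zpow_natCast]
      · conv_lhs => rw [h]
        rw [zpow_neg, zpow_natCast, orderOf_inv]
    rw [hd, this, orderOf_pow, hr]
  have hg : Int.gcd (r : ℤ) q = Nat.gcd r q.natAbs := by
    simp [Int.gcd]
  have hrpos : 0 < r := by rw [hr]; exact orderOf_pos a
  have hgdvd : Nat.gcd r q.natAbs ∣ r := Nat.gcd_dvd_left _ _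
  have hgd : Nat.gcd r q.natAbs * d = r := by
    rw [hdval, Nat.mul_div_cancel' hgdvd]
  have hdpos : 0 < d := orderOf_pos (a ^ q)
  rw [← hgd] at hrdvd
  push_cast at hrdvd
  rw [hg]
  have := (mul_dvd_mul_iff_right (c := (d : ℤ)) (by exact_mod_cast hdpos.ne')).mp hrdvd
  exact_mod_cast this
end

section
/- If a finitely generated group G admits a surjective endomorphism that is not injective (i.e., G is non-Hopfian), then G is not residually finite. -/
/-!
Malcev's argument. If `G` is finitely generated and `F` is finite, then `Hom(G, F)` is finite,
and precomposition with a surjective endomorphism `φ` is an injective self-map of it, hence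
a bijection. So every `π : G →* F` factors as `ψ ∘ φ` and kills `ker φ`; finite quotients
therefore cannot detect a nontrivial element of `ker φ`.
-/

namespace MonoidHom

variable {M N : Type*} [Monoid M] [Monoid N]

instance finite_of_fg [Monoid.FG M] [Finite N] : Finite (M →* N) := by
  obtain ⟨S, hS⟩ := Monoid.FG.fg_top (M := M)
  refine Finite.of_injective (fun f : M →* N => fun s : S => f s) fun f g hfg => ?_
  exact eq_of_eqOn_denseM hS fun x hx => congrFun hfg ⟨x, hx⟩

theorem exists_comp_eq_of_surjective [Monoid.FG M] [Finite N] {φ : M →* M}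
    (hφ : Function.Surjective φ) (π : M →* N) : ∃ ψ : M →* N, ψ.comp φ = π :=
  Finite.surjective_of_injective (f := fun ψ : M →* N => ψ.comp φ)
    (fun _ _ h => (cancel_right hφ).1 h) π

end MonoidHom

/-- A finitely generated non-Hopfian group is not residually finite. -/
theorem not_residually_finite_of_nonHopfian (G : Type*) [Group G]
    (hfg : Group.FG G) (φ : G →* G) (hsurj : Function.Surjective φ)
    (hninj : ¬ Function.Injective φ) :
    ¬ ResiduallyFinite G := by
  intro hrf
  obtain ⟨g, hφg, hg⟩ : ∃ g, φ g = 1 ∧ g ≠ 1 := by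
    simpa [injective_iff_map_eq_one] using hninj
  obtain ⟨F, _, _, π, hπg⟩ := hrf g hg
  obtain ⟨ψ, rfl⟩ := π.exists_comp_eq_of_surjective (φ := φ) hsurj
  exact hπg (by simp [hφg])
end

section
/- Let q divide 2p (p, q nonzero integers). Then there exists a surjective homomorphism φ : G_{p,q} → ℤ/qℤ such that φ(a^q) = 0, φ(a^p b) = 0 and φ(a^p b⁻¹) = 0, where G_{p,q} = ⟨a,b,s,t | [a,b]=1, s⁻¹a^q s = a^p b, t⁻¹a^q t = a^p b⁻¹⟩. -/
/-- If q ∣ 2p then there is a surjective homomorphism φ : G_{p,q} → ℤ/qℤ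
killing a^q, a^p b and a^p b⁻¹. -/
theorem hom_to_cyclic_killing_edges (p q : ℤ) (hp : p ≠ 0) (hq : q ≠ 0)
    (hdvd : q ∣ 2 * p) :
    ∃ φ : PresentedGroup (tubularRels p q) →* Multiplicative (ZMod q.natAbs),
      Function.Surjective φ ∧
      φ ((PresentedGroup.of 0 : PresentedGroup (tubularRels p q)) ^ q) = 1 ∧
      φ ((PresentedGroup.of 0) ^ p * PresentedGroup.of 1) = 1 ∧
      φ ((PresentedGroup.of 0) ^ p * (PresentedGroup.of 1)⁻¹) = 1 := by
  set n := q.natAbs with hn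
  have hq0 : ((q : ZMod n)) = 0 := by
    rw [ZMod.intCast_zmod_eq_zero_iff_dvd]
    exact Int.natAbs_dvd.mpr dvd_rfl
  have h2p : ((2 * p : ℤ) : ZMod n) = 0 := by
    rw [ZMod.intCast_zmod_eq_zero_iff_dvd]
    exact dvd_trans (Int.natAbs_dvd.mpr dvd_rfl) hdvd
  haveI : NeZero n := ⟨Int.natAbs_ne_zero.mpr hq⟩
  set f : Fin 4 → Multiplicative (ZMod n) :=
    ![Multiplicative.ofAdd 1, Multiplicative.ofAdd (-(p : ZMod n)), 1, 1] with hf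
  have hrel : ∀ r ∈ tubularRels p q, FreeGroup.lift f r = 1 := by
    intro r hr
    rcases hr with h | h | h <;> subst h <;>
      simp only [ga, gb, gs, gt, map_mul, map_inv, map_zpow, FreeGroup.lift_apply_of, hf] <;>
      simp only [Matrix.cons_val_zero, Matrix.cons_val_one, Matrix.head_cons,
        Matrix.cons_val_two, Matrix.cons_val_three, Matrix.tail_cons, one_zpow, inv_one,
        one_mul, mul_one]
    · simp only [zpow_neg, zpow_one, ← ofAdd_neg, ← ofAdd_add]
      congr 1; ring
    · rw [← ofAdd_zsmul, ← ofAdd_zsmul]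
      simp only [zsmul_eq_mul, mul_one]
      rw [mul_inv_eq_one, ← ofAdd_add]
      congr 1
      rw [hq0]
      ring
    · rw [← ofAdd_zsmul, ← ofAdd_zsmul, ← ofAdd_neg]
      simp only [zsmul_eq_mul, mul_one]
      rw [mul_inv_eq_one, ← ofAdd_add]
      have h : (p : ZMod n) + (p : ZMod n) = 0 := by
        have := h2p; push_cast at this; linear_combination this
      rw [hq0]
      congr 1
      linear_combination -h
  refine ⟨PresentedGroup.toGroup hrel, ?_, ?_, ?_, ?_⟩
  · intro y
    refine ⟨(PresentedGroup.of 0) ^ ((Multiplicative.toAdd y).val), ?_⟩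
    rw [map_pow, PresentedGroup.toGroup.of]
    simp only [hf, Matrix.cons_val_zero]
    rw [← ofAdd_nsmul]
    rw [nsmul_eq_mul, mul_one, ZMod.natCast_val, ZMod.cast_id, ofAdd_toAdd]
  · rw [map_zpow, PresentedGroup.toGroup.of]
    simp only [hf, Matrix.cons_val_zero]
    rw [← ofAdd_zsmul]
    simp [zsmul_eq_mul, hq0]
  · rw [map_mul, map_zpow, PresentedGroup.toGroup.of, PresentedGroup.toGroup.of]
    simp only [hf, Matrix.cons_val_zero, Matrix.cons_val_one, Matrix.head_cons]
    rw [← ofAdd_zsmul, ← ofAdd_add]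
    simp [zsmul_eq_mul]
  · rw [map_mul, map_inv, map_zpow, PresentedGroup.toGroup.of, PresentedGroup.toGroup.of]
    simp only [hf, Matrix.cons_val_zero, Matrix.cons_val_one, Matrix.head_cons]
    rw [← ofAdd_zsmul, ← ofAdd_neg, ← ofAdd_add]
    have : (p : ZMod n) + (p : ZMod n) = 0 := by
      have := h2p; push_cast at this; linear_combination this
    simp only [zsmul_eq_mul, mul_one, neg_neg]
    rw [show (p:ZMod n) + p = 0 from this]
    rfl
end
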